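/- Fix a 2×2 real matrix ε and E ∈ ℝ². For a third-order tensor variable g on ℝ², denote by ∂H/∂g_{ijk} the partial derivatives of the function g ↦ H(ε, g, E) (the isotropic electrical enthalpy density), where g ranges over all third-order tensors. Then at any minor-symmetric g, the symmetrized derivative τ_{ijk} := (1/2)(∂H/∂g_{ijk} + ∂H/∂g_{ikj}) equals the higher-order stress τ_{ijk} = (1/2) l² [ λ ( (Σ_n g_{njn}) δ_{ik} + (Σ_n g_{nkn}) δ_{ij} ) + G ( 2 g_{ijk} + g_{jik} + g_{kij} ) ] − f₁ δ_{jk} E_i − f₂ ( δ_{ij} E_k + δ_{ik} E_j ). -/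

import Mathlib

/-- Kronecker delta on `Fin 2`. -/
noncomputable def kd (i j : Fin 2) : ℝ := if i = j then 1 else 0

/-- The isotropic electrical enthalpy density
`H(ε,g,E) = ½λ(ε_ii)² + G ε_ij ε_ij + ½l²[λ g_jij g_kik + G(g_ijk g_ijk + g_ijk g_jik)]
 − e_ijk E_i ε_jk − (f₁ δ_ij δ_kl + f₂(δ_ik δ_jl + δ_il δ_jk)) E_i g_jkl − ½ κ_ij E_i E_j`. -/
noncomputable def enthalpy (lam G l f₁ f₂ : ℝ) (e : Fin 2 → Fin 2 → Fin 2 → ℝ)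
    (κ : Fin 2 → Fin 2 → ℝ) (ε : Fin 2 → Fin 2 → ℝ)
    (g : Fin 2 → Fin 2 → Fin 2 → ℝ) (E : Fin 2 → ℝ) : ℝ :=
  (1/2) * lam * (∑ i, ε i i)^2 + G * ∑ i, ∑ j, (ε i j)^2
    + (1/2) * l^2 *
        (lam * ∑ i, (∑ j, g j i j) * (∑ k, g k i k)
          + G * ((∑ i, ∑ j, ∑ k, (g i j k)^2) + ∑ i, ∑ j, ∑ k, g i j k * g j i k))
    - (∑ i, ∑ j, ∑ k, e i j k * E i * ε j k)
    - (∑ i, ∑ j, ∑ k, ∑ m,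
        (f₁ * kd i j * kd k m + f₂ * (kd i k * kd j m + kd i m * kd j k)) * E i * g j k m)
    - (1/2) * ∑ i, ∑ j, κ i j * E i * E j

/-- The unit third-order tensor in the `(i,j,k)` slot, used as the direction for the
partial derivative `∂H/∂g_{ijk}`. -/
noncomputable def unitTensor (i j k : Fin 2) : Fin 2 → Fin 2 → Fin 2 → ℝ :=
  fun a b c => if a = i ∧ b = j ∧ c = k then 1 else 0

/-!
As a function of `g`, the enthalpy is a constant plus `½ l² B(g, g)` minus a linear form `L(g)`,
where `B` is the symmetric bilinear strain-gradient form and `L` the flexoelectric coupling with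
`E`. Hence `∂H/∂g = l² B(g, ·) - L`. Evaluated on the unit tensors `e_{ijk}`, the form `B(g, ·)`
picks out `λ g_{njn} δ_{ik} + G (g_{ijk} + g_{jik})`, and averaging over `e_{ijk}` and `e_{ikj}`
with the minor symmetry `g_{ikj} = g_{ijk}` gives the higher-order stress.
-/

open Finset

theorem hasFDerivAt_bilinear_diag_of_symm {E F : Type*} [NormedAddCommGroup E]
    [NormedSpace ℝ E] [NormedAddCommGroup F] [NormedSpace ℝ F] (B : E →L[ℝ] E →L[ℝ] F)
    (hB : ∀ x y, B x y = B y x) (x : E) :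
    HasFDerivAt (fun y => B y y) ((2 : ℝ) • B x) x := by
  refine (B.hasFDerivAt_of_bilinear (hasFDerivAt_id x) (hasFDerivAt_id x)).congr_fderiv ?_
  ext y
  simp [hB y x, two_smul]

section Tensor

variable {ι : Type*}

noncomputable def coord (a b c : ι) : (ι → ι → ι → ℝ) →L[ℝ] ℝ :=
  (ContinuousLinearMap.proj c : (ι → ℝ) →L[ℝ] ℝ).comp
    ((ContinuousLinearMap.proj b : (ι → ι → ℝ) →L[ℝ] (ι → ℝ)).comp
      (ContinuousLinearMap.proj a : (ι → ι → ι → ℝ) →L[ℝ] (ι → ι → ℝ)))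

@[simp] lemma coord_apply (a b c : ι) (g : ι → ι → ι → ℝ) : coord a b c g = g a b c := rfl

variable [Fintype ι]

noncomputable def contraction (m : ι) : (ι → ι → ι → ℝ) →L[ℝ] ℝ := ∑ n, coord n m n

@[simp] lemma contraction_apply (m : ι) (g : ι → ι → ι → ℝ) :
    contraction m g = ∑ n, g n m n := by
  simp [contraction]

noncomputable def strainGradientForm (lam G : ℝ) :
    (ι → ι → ι → ℝ) →L[ℝ] (ι → ι → ι → ℝ) →L[ℝ] ℝ :=
  lam • ∑ m, (contraction m).smulRight (contraction m)
    + G • ∑ a, ∑ b, ∑ c, (coord a b c).smulRight (coord a b c + coord b a c)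

lemma strainGradientForm_apply (lam G : ℝ) (g h : ι → ι → ι → ℝ) :
    strainGradientForm lam G g h = lam * ∑ m, (∑ n, g n m n) * (∑ n, h n m n)
      + G * ∑ a, ∑ b, ∑ c, g a b c * (h a b c + h b a c) := by
  simp [strainGradientForm, mul_add]

lemma strainGradientForm_comm (lam G : ℝ) (g h : ι → ι → ι → ℝ) :
    strainGradientForm lam G g h = strainGradientForm lam G h g := by
  simp only [strainGradientForm_apply, mul_add, sum_add_distrib]
  rw [sum_comm (f := fun a b => ∑ c, g a b c * h b a c)]
  simp only [mul_comm]

end Tensor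

lemma kd_comm (i j : Fin 2) : kd i j = kd j i := by
  simp only [kd, eq_comm]

noncomputable def flexoelectricForm (f₁ f₂ : ℝ) (E : Fin 2 → ℝ) :
    (Fin 2 → Fin 2 → Fin 2 → ℝ) →L[ℝ] ℝ :=
  ∑ i, ∑ j, ∑ k, ∑ m,
    ((f₁ * kd i j * kd k m + f₂ * (kd i k * kd j m + kd i m * kd j k)) * E i) • coord j k m

lemma strainGradientForm_unitTensor (lam G : ℝ) (g : Fin 2 → Fin 2 → Fin 2 → ℝ) (i j k : Fin 2) :
    strainGradientForm lam G g (unitTensor i j k)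
      = lam * (∑ n, g n j n) * kd i k + G * (g i j k + g j i k) := by
  simp [strainGradientForm_apply, unitTensor, ite_and, kd, sum_ite_eq', sum_ite_irrel, mul_add,
    sum_add_distrib, -Fin.sum_univ_two]

lemma flexoelectricForm_unitTensor (f₁ f₂ : ℝ) (E : Fin 2 → ℝ) (i j k : Fin 2) :
    flexoelectricForm f₁ f₂ E (unitTensor i j k)
      = f₁ * kd j k * E i + f₂ * (kd i k * E j + kd i j * E k) := by
  simp [flexoelectricForm, unitTensor, ite_and, kd, sum_ite_eq', sum_ite_irrel, mul_add, add_mul,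
    sum_add_distrib, -Fin.sum_univ_two]

section Enthalpy

variable (lam G l f₁ f₂ : ℝ) (e : Fin 2 → Fin 2 → Fin 2 → ℝ) (κ : Fin 2 → Fin 2 → ℝ)
  (ε : Fin 2 → Fin 2 → ℝ) (E : Fin 2 → ℝ)

lemma enthalpy_eq_enthalpy_zero_add (g : Fin 2 → Fin 2 → Fin 2 → ℝ) :
    enthalpy lam G l f₁ f₂ e κ ε g E = enthalpy lam G l f₁ f₂ e κ ε 0 E
      + (1/2) * l^2 * strainGradientForm lam G g g - flexoelectricForm f₁ f₂ E g := by
  simp only [enthalpy, one_div, Fin.sum_univ_two, sq, mul_add, sum_add_distrib, Pi.zero_apply,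
    sum_const_zero, mul_zero, add_zero, sub_zero, strainGradientForm_apply, flexoelectricForm,
    add_apply, smul_apply, coord_apply, smul_eq_mul]
  ring

lemma hasFDerivAt_enthalpy (g : Fin 2 → Fin 2 → Fin 2 → ℝ) :
    HasFDerivAt (fun g' => enthalpy lam G l f₁ f₂ e κ ε g' E)
      (l ^ 2 • strainGradientForm lam G g - flexoelectricForm f₁ f₂ E) g := by
  have hB := hasFDerivAt_bilinear_diag_of_symm _ (strainGradientForm_comm lam G) g
  refine ((((hB.const_mul ((1 / 2) * l ^ 2)).const_add (enthalpy lam G l f₁ f₂ e κ ε 0 E)).sub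
    (flexoelectricForm f₁ f₂ E).hasFDerivAt).congr_of_eventuallyEq
      (.of_forall (enthalpy_eq_enthalpy_zero_add lam G l f₁ f₂ e κ ε E))).congr_fderiv ?_
  rw [smul_smul]
  congr 2
  ring

end Enthalpy

/-- for fixed `ε` and `E`, the function `g ↦ H(ε,g,E)` is differentiable, and
at any minor-symmetric `g` the symmetrized derivative
`τ_ijk = ½(∂H/∂g_ijk + ∂H/∂g_ikj)` equals the higher-order stress
`τ_ijk = ½ l² [λ(g_njn δ_ik + g_nkn δ_ij) + G(2g_ijk + g_jik + g_kij)]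
  − f₁ δ_jk E_i − f₂ (δ_ij E_k + δ_ik E_j)`. -/
theorem higher_order_stress_constitutive_relation
    (lam G l f₁ f₂ : ℝ) (e : Fin 2 → Fin 2 → Fin 2 → ℝ) (κ : Fin 2 → Fin 2 → ℝ)
    (ε : Fin 2 → Fin 2 → ℝ) (E : Fin 2 → ℝ)
    (g : Fin 2 → Fin 2 → Fin 2 → ℝ) (hg : ∀ i j k, g i j k = g i k j) :
    DifferentiableAt ℝ (fun g' => enthalpy lam G l f₁ f₂ e κ ε g' E) g ∧
    ∀ i j k,
      (1/2) * (fderiv ℝ (fun g' => enthalpy lam G l f₁ f₂ e κ ε g' E) g (unitTensor i j k)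
          + fderiv ℝ (fun g' => enthalpy lam G l f₁ f₂ e κ ε g' E) g (unitTensor i k j))
        = (1/2) * l^2 *
            (lam * ((∑ n, g n j n) * kd i k + (∑ n, g n k n) * kd i j)
              + G * (2 * g i j k + g j i k + g k i j))
          - f₁ * kd j k * E i - f₂ * (kd i j * E k + kd i k * E j) := by
  have hH := hasFDerivAt_enthalpy lam G l f₁ f₂ e κ ε E g
  refine ⟨hH.differentiableAt, fun i j k => ?_⟩
  simp only [hH.fderiv, sub_apply, smul_apply, smul_eq_mul, strainGradientForm_unitTensor,
    flexoelectricForm_unitTensor, hg i k j, kd_comm k j]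
  ring
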